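/- arXiv:1512.02709 — 16 statements merged into one kernel-verified Lean document; each statement's English description precedes it below -/
import Mathlib

section
/- For all positive integers m, n and every BQAP1 instance (q, c, d), the average objective function value over all n^m·m^n feasible solutions equals (1/(m·n))·∑_{i,j,k,l} q i j k l + (1/n)·∑_{i,j} c i j + (1/m)·∑_{i,j} d i j. -/
/-!
Averaging over all feasible solutions is taking the expectation for (σ, τ) uniform, under which
σ and τ are independent and each value σ i, τ l is uniform. By linearity the average of `f1` is
the sum of the averages of its terms, and `q i (σ i) (τ l) l` averages to the mean of
`q i · · l` over `Fin n × Fin m`.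
-/

/-- Objective function of BQAP1: `σ i` is the column of the unique 1 in row `i` of `x`,
`τ l` is the row of the unique 1 in column `l` of `y`. -/
noncomputable def f1 {m n : ℕ} (q : Fin m → Fin n → Fin m → Fin n → ℝ)
    (c d : Fin m → Fin n → ℝ) (σ : Fin m → Fin n) (τ : Fin n → Fin m) : ℝ :=
  (∑ i, ∑ l, q i (σ i) (τ l) l) + (∑ i, c i (σ i)) + (∑ l, d (τ l) l)

open Finset
open scoped BigOperators

lemma Fintype.expect_pi_apply {α β M : Type*} [Fintype α] [DecidableEq α] [Fintype β]
    [AddCommMonoid M] [Module ℚ≥0 M] (i : α) (g : β → M) :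
    𝔼 σ : α → β, g (σ i) = 𝔼 j, g j := by
  rcases isEmpty_or_nonempty β with hβ | hβ
  · have : IsEmpty (α → β) := ⟨fun σ => isEmptyElim (σ i)⟩
    simp
  · rw [Fintype.expect_equiv (Equiv.piSplitAt i fun _ => β) (fun σ => g (σ i)) (fun p => g p.1)
      (fun _ => rfl), ← univ_product_univ, expect_product]
    simp

lemma expect_f1 {m n : ℕ} (q : Fin m → Fin n → Fin m → Fin n → ℝ) (c d : Fin m → Fin n → ℝ) :
    𝔼 στ : (Fin m → Fin n) × (Fin n → Fin m), f1 q c d στ.1 στ.2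
      = ∑ i, ∑ l, 𝔼 j, 𝔼 k, q i j k l + ∑ i, 𝔼 j, c i j + ∑ l, 𝔼 k, d k l := by
  rw [← univ_product_univ, expect_product]
  simp only [f1, expect_add_distrib, expect_sum_comm]
  congr 1; congr 1
  · refine sum_congr rfl fun i _ => sum_congr rfl fun l _ => ?_
    rw [Fintype.expect_pi_apply i (fun j => 𝔼 τ : Fin n → Fin m, q i j (τ l) l)]
    exact expect_congr rfl fun j _ => Fintype.expect_pi_apply l (q i j · l)
  -- The summation index makes the other factor nonempty, so averaging a constant over it is exact.
  · refine sum_congr rfl fun i _ => ?_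
    have : Nonempty (Fin n → Fin m) := ⟨fun _ => i⟩
    simp only [Fintype.expect_const]
    exact Fintype.expect_pi_apply i (c i)
  · refine sum_congr rfl fun l _ => ?_
    have : Nonempty (Fin m → Fin n) := ⟨fun _ => l⟩
    rw [Fintype.expect_const]
    exact Fintype.expect_pi_apply l (d · l)

theorem average_value_BQAP1_general (m n : ℕ)
    (q : Fin m → Fin n → Fin m → Fin n → ℝ) (c d : Fin m → Fin n → ℝ) :
    (∑ στ : (Fin m → Fin n) × (Fin n → Fin m), f1 q c d στ.1 στ.2) /
        ((n : ℝ) ^ m * (m : ℝ) ^ n) =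
      (1 / ((m : ℝ) * n)) * (∑ i, ∑ j, ∑ k, ∑ l, q i j k l)
        + (1 / (n : ℝ)) * (∑ i, ∑ j, c i j)
        + (1 / (m : ℝ)) * (∑ i, ∑ j, d i j) := by
  have hcard : Fintype.card ((Fin m → Fin n) × (Fin n → Fin m)) = (n : ℝ) ^ m * (m : ℝ) ^ n := by
    simp
  rw [← hcard, ← Fintype.expect_eq_sum_div_card, expect_f1]
  simp only [Fintype.expect_eq_sum_div_card, Fintype.card_fin, sum_div, mul_sum,
    one_div_mul_eq_div, div_div]
  congr 1
  · congr 1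
    exact sum_congr rfl fun i _ => sum_comm.trans (sum_congr rfl fun j _ => sum_comm)
  · exact sum_comm

theorem average_value_BQAP1 (m n : ℕ) (hm : 0 < m) (hn : 0 < n)
    (q : Fin m → Fin n → Fin m → Fin n → ℝ) (c d : Fin m → Fin n → ℝ) :
    (∑ στ : (Fin m → Fin n) × (Fin n → Fin m), f1 q c d στ.1 στ.2) /
        ((n : ℝ) ^ m * (m : ℝ) ^ n) =
      (1 / ((m : ℝ) * n)) * (∑ i, ∑ j, ∑ k, ∑ l, q i j k l)
        + (1 / (n : ℝ)) * (∑ i, ∑ j, c i j)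
        + (1 / (m : ℝ)) * (∑ i, ∑ j, d i j) :=
  average_value_BQAP1_general m n q c d
end

section
/- For all positive integers m, n and every BQAP2 instance (q, c, d), the average objective function value over all m^m·n^n feasible solutions equals (1/(m·n))·∑_{i,j,k,l} q i j k l + (1/m)·∑_{i,j} c i j + (1/n)·∑_{i,j} d i j. -/
/-!
Under the uniform distribution on pairs `(σ, τ)`, every coordinate `σ i` and `τ l` is uniformly
distributed and `σ` is independent of `τ`. By linearity of expectation, each term of `f2` then
averages to the corresponding average of `q`, `c` or `d`.
-/

open Finset
open scoped BigOperators

/-- Objective function of BQAP2: `σ i` is the column of the unique 1 in row `i` of `x`,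
`τ l` is the row of the unique 1 in column `l` of `y`. -/
noncomputable def f2 {m n : ℕ} (q : Fin m → Fin m → Fin n → Fin n → ℝ)
    (c : Fin m → Fin m → ℝ) (d : Fin n → Fin n → ℝ)
    (σ : Fin m → Fin m) (τ : Fin n → Fin n) : ℝ :=
  (∑ i, ∑ l, q i (σ i) (τ l) l) + (∑ i, c i (σ i)) + (∑ l, d (τ l) l)

section
variable {ι κ ι' κ' M : Type*} [Fintype ι] [Fintype κ] [Fintype ι'] [Fintype κ']
  [AddCommMonoid M] [Module ℚ≥0 M]

theorem Fintype.expect_prod_type (f : ι × κ → M) :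
    𝔼 x, f x = 𝔼 i, 𝔼 j, f (i, j) := by
  rw [← univ_product_univ, expect_product]

theorem Fintype.expect_apply [DecidableEq ι] (i : ι) (g : κ → M) :
    𝔼 σ : ι → κ, g (σ i) = 𝔼 j, g j := by
  rw [Fintype.expect_equiv (Equiv.funSplitAt i κ) (fun σ => g (σ i)) (fun p => g p.1)
    fun _ => rfl, Fintype.expect_prod_type]
  refine expect_congr rfl fun j _ => ?_
  have : Nonempty ({i' // i' ≠ i} → κ) := ⟨fun _ => j⟩
  exact Fintype.expect_const (g j)

theorem Fintype.expect_expect_apply_apply [DecidableEq ι] [DecidableEq ι'] (i : ι) (i' : ι')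
    (g : κ → κ' → M) :
    𝔼 σ : ι → κ, 𝔼 τ : ι' → κ', g (σ i) (τ i') = 𝔼 j, 𝔼 k, g j k := by
  simp only [Fintype.expect_apply i' (g _), Fintype.expect_apply i (fun j => 𝔼 k, g j k)]

end

theorem average_value_BQAP2_general (m n : ℕ)
    (q : Fin m → Fin m → Fin n → Fin n → ℝ)
    (c : Fin m → Fin m → ℝ) (d : Fin n → Fin n → ℝ) :
    (∑ στ : (Fin m → Fin m) × (Fin n → Fin n), f2 q c d στ.1 στ.2) /
        ((m : ℝ) ^ m * (n : ℝ) ^ n) =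
      (1 / ((m : ℝ) * n)) * (∑ i, ∑ j, ∑ k, ∑ l, q i j k l)
        + (1 / (m : ℝ)) * (∑ i, ∑ j, c i j)
        + (1 / (n : ℝ)) * (∑ i, ∑ j, d i j) := by
  have : Nonempty (Fin m → Fin m) := ⟨id⟩
  have : Nonempty (Fin n → Fin n) := ⟨id⟩
  have hcard : (m : ℝ) ^ m * (n : ℝ) ^ n = Fintype.card ((Fin m → Fin m) × (Fin n → Fin n)) := by
    simp
  have hq (i : Fin m) (l : Fin n) : 𝔼 σ : Fin m → Fin m, 𝔼 τ : Fin n → Fin n, q i (σ i) (τ l) l =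
      𝔼 j, 𝔼 k, q i j k l :=
    Fintype.expect_expect_apply_apply i l (fun j k => q i j k l)
  have hd (l : Fin n) : 𝔼 τ : Fin n → Fin n, d (τ l) l = 𝔼 k, d k l :=
    Fintype.expect_apply l (fun k => d k l)
  rw [hcard, ← Fintype.expect_eq_sum_div_card, Fintype.expect_prod_type]
  simp only [f2, expect_add_distrib, expect_sum_comm, Fintype.expect_const, hq, hd,
    Fintype.expect_apply]
  simp only [Fintype.expect_eq_sum_div_card, Fintype.card_fin, ← sum_div, div_div,
    one_div_mul_eq_div]
  rw [mul_comm (n : ℝ), sum_comm (f := fun l k => d k l)]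
  congr 3
  refine sum_congr rfl fun i _ => ?_
  rw [sum_comm]
  exact sum_congr rfl fun j _ => sum_comm

theorem average_value_BQAP2 (m n : ℕ) (hm : 0 < m) (hn : 0 < n)
    (q : Fin m → Fin m → Fin n → Fin n → ℝ)
    (c : Fin m → Fin m → ℝ) (d : Fin n → Fin n → ℝ) :
    (∑ στ : (Fin m → Fin m) × (Fin n → Fin n), f2 q c d στ.1 στ.2) /
        ((m : ℝ) ^ m * (n : ℝ) ^ n) =
      (1 / ((m : ℝ) * n)) * (∑ i, ∑ j, ∑ k, ∑ l, q i j k l)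
        + (1 / (m : ℝ)) * (∑ i, ∑ j, c i j)
        + (1 / (n : ℝ)) * (∑ i, ∑ j, d i j) :=
  average_value_BQAP2_general m n q c d
end

section
/- For all positive integers m, n and every BQAP1 instance (q, c, d), the sum of the objective values f1(σ,τ) over all feasible solutions (σ,τ) equals n^{m-1}·m^{n-1}·∑_{i,j,k,l} q i j k l + n^{m-1}·m^{n}·∑_{i,j} c i j + n^{m}·m^{n-1}·∑_{i,j} d i j. -/
lemma sum_eval {m n : ℕ} (i : Fin m) (g : Fin n → ℝ) :
    ∑ σ : Fin m → Fin n, g (σ i) = (n:ℝ)^(m-1) * ∑ j, g j := by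
  rw [← Equiv.sum_comp (Equiv.funSplitAt i (Fin n)).symm (fun σ => g (σ i))]
  simp only [Equiv.funSplitAt_symm_apply]
  rw [Fintype.sum_prod_type]
  simp [Finset.sum_const, Fintype.card_fun, mul_comm, Finset.mul_sum, ← Finset.sum_mul]

lemma sum_eval2 {m n : ℕ} (i : Fin m) (l : Fin n) (g : Fin n → Fin m → ℝ) :
    ∑ στ : (Fin m → Fin n) × (Fin n → Fin m), g (στ.1 i) (στ.2 l) =
      (n:ℝ)^(m-1) * ((m:ℝ)^(n-1) * ∑ j, ∑ k, g j k) := by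
  rw [Fintype.sum_prod_type]
  rw [sum_eval i (fun j => ∑ τ : Fin n → Fin m, g j (τ l))]
  congr 1
  rw [Finset.mul_sum]
  congr 1; ext j
  exact sum_eval l (g j)

theorem sum_value_BQAP1 (m n : ℕ) (hm : 0 < m) (hn : 0 < n)
    (q : Fin m → Fin n → Fin m → Fin n → ℝ) (c d : Fin m → Fin n → ℝ) :
    (∑ στ : (Fin m → Fin n) × (Fin n → Fin m), f1 q c d στ.1 στ.2) =
      (n : ℝ) ^ (m - 1) * (m : ℝ) ^ (n - 1) * (∑ i, ∑ j, ∑ k, ∑ l, q i j k l)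
        + (n : ℝ) ^ (m - 1) * (m : ℝ) ^ n * (∑ i, ∑ j, c i j)
        + (n : ℝ) ^ m * (m : ℝ) ^ (n - 1) * (∑ i, ∑ j, d i j) := by
  simp only [f1, Finset.sum_add_distrib]
  congr 1
  · congr 1
    · -- quadratic part
      rw [Finset.sum_comm]
      have h1 : ∀ i : Fin m,
          (∑ στ : (Fin m → Fin n) × (Fin n → Fin m), ∑ l, q i (στ.1 i) (στ.2 l) l) =
          ↑n ^ (m - 1) * ↑m ^ (n - 1) * (∑ j, ∑ k, ∑ l, q i j k l) := by
        intro i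
        rw [Finset.sum_comm]
        have h2 : ∀ l : Fin n,
            (∑ στ : (Fin m → Fin n) × (Fin n → Fin m), q i (στ.1 i) (στ.2 l) l) =
            ↑n ^ (m - 1) * ↑m ^ (n - 1) * (∑ j, ∑ k, q i j k l) := by
          intro l
          rw [sum_eval2 i l (fun j k => q i j k l)]; ring
        rw [Finset.sum_congr rfl fun l _ => h2 l, ← Finset.mul_sum]
        congr 1
        rw [Finset.sum_comm]
        exact Finset.sum_congr rfl fun j _ => Finset.sum_comm
      rw [Finset.sum_congr rfl fun i _ => h1 i, ← Finset.mul_sum]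
    · -- c part
      rw [Fintype.sum_prod_type]
      have h1 : ∀ x : Fin m → Fin n,
          (∑ _y : Fin n → Fin m, ∑ i, c i (x i)) = (m:ℝ)^n * ∑ i, c i (x i) := by
        intro x; simp [Fintype.card_fun, mul_comm]
      rw [Finset.sum_congr rfl fun x _ => h1 x, ← Finset.mul_sum, Finset.sum_comm]
      rw [Finset.sum_congr rfl fun i _ => sum_eval i (c i), ← Finset.mul_sum]
      ring
  · -- d part
    rw [Fintype.sum_prod_type]
    have h1 : (∑ _x : Fin m → Fin n, ∑ y : Fin n → Fin m, ∑ l, d (y l) l) =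
        (n:ℝ)^m * ∑ y : Fin n → Fin m, ∑ l, d (y l) l := by
      simp [Fintype.card_fun, mul_comm]
    rw [h1, Finset.sum_comm]
    rw [Finset.sum_congr rfl fun l _ => sum_eval l (fun k => d k l), ← Finset.mul_sum,
      Finset.sum_comm]
    ring
end

section
/- For all positive integers m, n and every BQAP1 instance (q, c, d), the number of feasible solutions (σ,τ) with f1(σ,τ) ≥ A1(q,c,d) is at least n^{m-1}·m^{n-1}. -/
/-- Average objective value of BQAP1. -/
noncomputable def A1 {m n : ℕ} (q : Fin m → Fin n → Fin m → Fin n → ℝ)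
    (c d : Fin m → Fin n → ℝ) : ℝ :=
  (1 / ((m : ℝ) * n)) * (∑ i, ∑ j, ∑ k, ∑ l, q i j k l)
    + (1 / (n : ℝ)) * (∑ i, ∑ j, c i j)
    + (1 / (m : ℝ)) * (∑ i, ∑ j, d i j)

/-! Shift a solution cyclically: `σ ↦ σ + a` (mod `n`) and `τ ↦ τ + b` (mod `m`). Over the `m·n`
shifts `(a, b)` every entry of `q`, `c`, `d` is hit equally often, so the shifts of any solution
average exactly to `A1`, and some shift is at least `A1`. Sending a solution to (its good shift,
the shift used) is injective, so `n^m · m^n ≤ (number of good solutions) · n · m`. -/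

open Finset Function

theorem Nat.card_le_card_mul_card_of_forall_exists_mem {ι X : Type*} [Finite ι] [Finite X]
    (f : ι → X → X) (hf : ∀ i, Injective (f i)) (S : Set X) (hS : ∀ x, ∃ i, f i x ∈ S) :
    Nat.card X ≤ Nat.card S * Nat.card ι := by
  choose i hi using hS
  rw [← Nat.card_prod]
  refine Nat.card_le_card_of_injective (fun x => (⟨f (i x) x, hi x⟩, i x)) fun x y hxy => ?_
  simp only [Prod.mk.injEq, Subtype.mk.injEq] at hxy
  obtain ⟨hf_eq, hi_eq⟩ := hxy
  rw [hi_eq] at hf_eq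
  exact hf _ hf_eq

section BQAP1

variable {m n : ℕ} [NeZero m] [NeZero n]
  (q : Fin m → Fin n → Fin m → Fin n → ℝ) (c d : Fin m → Fin n → ℝ)

theorem sum_f1_add_const (σ : Fin m → Fin n) (τ : Fin n → Fin m) :
    ∑ p : Fin n × Fin m, f1 q c d (fun i => σ i + p.1) (fun l => τ l + p.2)
      = m * n * A1 q c d := by
  have hq : ∑ p : Fin n × Fin m, ∑ i, ∑ l, q i (σ i + p.1) (τ l + p.2) l
      = ∑ i, ∑ j, ∑ k, ∑ l, q i j k l :=
    calc _ = ∑ i, ∑ l, ∑ p : Fin n × Fin m, q i (σ i + p.1) (τ l + p.2) l := by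
            rw [sum_comm]; exact sum_congr rfl fun i _ => sum_comm
      _ = ∑ i, ∑ l, ∑ j, ∑ k, q i j k l := by
            refine sum_congr rfl fun i _ => sum_congr rfl fun l _ => ?_
            rw [← Fintype.sum_prod_type']
            exact Equiv.sum_comp (Equiv.addLeft (σ i, τ l)) fun p : Fin n × Fin m => q i p.1 p.2 l
      _ = _ := sum_congr rfl fun i _ => by
            rw [sum_comm]; exact sum_congr rfl fun j _ => sum_comm
  have hc : ∑ p : Fin n × Fin m, ∑ i, c i (σ i + p.1) = m * ∑ i, ∑ j, c i j := by
    rw [sum_comm, mul_sum]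
    refine sum_congr rfl fun i _ => ?_
    simp only [Fintype.sum_prod_type, sum_const, card_univ, Fintype.card_fin, nsmul_eq_mul,
      ← mul_sum]
    exact congrArg _ (Equiv.sum_comp (Equiv.addLeft (σ i)) (c i))
  have hd : ∑ p : Fin n × Fin m, ∑ l, d (τ l + p.2) l = n * ∑ i, ∑ j, d i j := by
    conv_rhs => rw [sum_comm]
    rw [sum_comm, mul_sum]
    refine sum_congr rfl fun l _ => ?_
    simp only [Fintype.sum_prod_type_right, sum_const, card_univ, Fintype.card_fin,
      nsmul_eq_mul, ← mul_sum]
    exact congrArg _ (Equiv.sum_comp (Equiv.addLeft (τ l)) fun k => d k l)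
  have hm : (m : ℝ) ≠ 0 := Nat.cast_ne_zero.mpr (NeZero.ne m)
  have hn : (n : ℝ) ≠ 0 := Nat.cast_ne_zero.mpr (NeZero.ne n)
  simp only [f1, sum_add_distrib, hq, hc, hd, A1]
  field_simp

theorem exists_f1_add_const_ge (σ : Fin m → Fin n) (τ : Fin n → Fin m) :
    ∃ p : Fin n × Fin m, A1 q c d ≤ f1 q c d (fun i => σ i + p.1) (fun l => τ l + p.2) := by
  have havg : ∑ _p : Fin n × Fin m, A1 q c d
      ≤ ∑ p : Fin n × Fin m, f1 q c d (fun i => σ i + p.1) (fun l => τ l + p.2) := by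
    rw [sum_f1_add_const, sum_const, card_univ, Fintype.card_prod, Fintype.card_fin,
      Fintype.card_fin, nsmul_eq_mul, Nat.cast_mul, mul_comm (n : ℝ)]
  obtain ⟨p, -, hp⟩ := exists_le_of_sum_le univ_nonempty havg
  exact ⟨p, hp⟩

end BQAP1

theorem domination_BQAP1 (m n : ℕ) (hm : 0 < m) (hn : 0 < n)
    (q : Fin m → Fin n → Fin m → Fin n → ℝ) (c d : Fin m → Fin n → ℝ) :
    n ^ (m - 1) * m ^ (n - 1) ≤
      {στ : (Fin m → Fin n) × (Fin n → Fin m) |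
        f1 q c d στ.1 στ.2 ≥ A1 q c d}.ncard := by
  have : NeZero m := ⟨hm.ne'⟩
  have : NeZero n := ⟨hn.ne'⟩
  have hcount := Nat.card_le_card_mul_card_of_forall_exists_mem
    (fun (p : Fin n × Fin m) x => x + (const _ p.1, const _ p.2)) (fun _ => add_left_injective _)
    {στ | f1 q c d στ.1 στ.2 ≥ A1 q c d} (fun x => exists_f1_add_const_ge q c d x.1 x.2)
  rw [Nat.card_coe_set_eq] at hcount
  simp only [Nat.card_eq_fintype_card, Fintype.card_prod, Fintype.card_fun, Fintype.card_fin] at hcount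
  refine le_of_mul_le_mul_right ?_ (Nat.mul_pos hn hm)
  calc n ^ (m - 1) * m ^ (n - 1) * (n * m)
      = (n ^ (m - 1) * n) * (m ^ (n - 1) * m) := by ring
    _ = n ^ m * m ^ n := by rw [pow_sub_one_mul hm.ne', pow_sub_one_mul hn.ne']
    _ ≤ _ := hcount
end

section
/- For all positive integers m, n and every BQAP2 instance (q, c, d), the number of feasible solutions (σ,τ) with f2(σ,τ) ≥ A2(q,c,d) is at least m^{m-1}·n^{n-1}. -/
/-- Average objective value of BQAP2. -/
noncomputable def A2 {m n : ℕ} (q : Fin m → Fin m → Fin n → Fin n → ℝ)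
    (c : Fin m → Fin m → ℝ) (d : Fin n → Fin n → ℝ) : ℝ :=
  (1 / ((m : ℝ) * n)) * (∑ i, ∑ j, ∑ k, ∑ l, q i j k l)
    + (1 / (m : ℝ)) * (∑ i, ∑ j, c i j)
    + (1 / (n : ℝ)) * (∑ i, ∑ j, d i j)


/-!
Adding a constant `g` to every value of `σ` and a constant `h` to every value of `τ` (in `ℤ/m`
and `ℤ/n`) permutes the entries each of the sums in `f2` runs over, so averaging `f2` over these
`m * n` shifts gives exactly `A2`. Hence each orbit of the shift group contains a solution of value
at least `A2`. The shift group acts freely on the `m ^ m * n ^ n` feasible solutions, so there are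
`m ^ (m - 1) * n ^ (n - 1)` orbits.
-/

open Finset Function

theorem AddSubgroup.card_quotient_le_ncard_of_forall_exists_add_mem {X : Type*} [AddGroup X]
    [Finite X] (H : AddSubgroup X) {S : Set X} (hS : ∀ x, ∃ a ∈ H, x + a ∈ S) :
    Nat.card (X ⧸ H) ≤ S.ncard := by
  rw [← Nat.card_coe_set_eq]
  refine Nat.card_le_card_of_surjective (fun x : S => (x : X ⧸ H)) ?_
  rintro ⟨x⟩
  obtain ⟨a, ha, hxa⟩ := hS x
  exact ⟨⟨x + a, hxa⟩, QuotientAddGroup.eq.2 (by simpa using H.neg_mem ha)⟩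

theorem AddMonoidHom.card_quotient_range_mul_card {G X : Type*} [AddGroup G] [AddGroup X]
    (f : G →+ X) (hf : Injective f) :
    Nat.card (X ⧸ f.range) * Nat.card G = Nat.card X := by
  rw [AddSubgroup.card_eq_card_quotient_mul_card_addSubgroup f.range,
    Nat.card_congr (AddMonoidHom.ofInjective hf).toEquiv]

theorem sum_sum_apply_add_eq_sum_sum {ι G M : Type*} [Fintype ι] [Fintype G] [AddGroup G]
    [AddCommMonoid M] (c : ι → G → M) (σ : ι → G) :
    ∑ g, ∑ i, c i (σ i + g) = ∑ i, ∑ j, c i j := by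
  rw [Finset.sum_comm]
  exact sum_congr rfl fun i _ => Equiv.sum_comp (Equiv.addLeft (σ i)) (c i)

section Shifts

variable {m n : ℕ} [NeZero m] [NeZero n]

theorem sum_f2_shift (q : Fin m → Fin m → Fin n → Fin n → ℝ) (c : Fin m → Fin m → ℝ)
    (d : Fin n → Fin n → ℝ) (σ : Fin m → Fin m) (τ : Fin n → Fin n) :
    ∑ g : Fin m, ∑ h : Fin n, f2 q c d (fun i => σ i + g) (fun l => τ l + h)
      = ∑ i, ∑ j, ∑ k, ∑ l, q i j k l + n * ∑ i, ∑ j, c i j + m * ∑ i, ∑ j, d i j := by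
  have hq : ∑ g : Fin m, ∑ h : Fin n, ∑ i, ∑ l, q i (σ i + g) (τ l + h) l
      = ∑ i, ∑ j, ∑ k, ∑ l, q i j k l := by
    calc ∑ g : Fin m, ∑ h : Fin n, ∑ i, ∑ l, q i (σ i + g) (τ l + h) l
        = ∑ g : Fin m, ∑ i, ∑ h : Fin n, ∑ l, q i (σ i + g) (τ l + h) l :=
          sum_congr rfl fun _ _ => Finset.sum_comm
      _ = ∑ i, ∑ j, ∑ h : Fin n, ∑ l, q i j (τ l + h) l :=
          sum_sum_apply_add_eq_sum_sum (fun i j => ∑ h : Fin n, ∑ l, q i j (τ l + h) l) σ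
      _ = ∑ i, ∑ j, ∑ k, ∑ l, q i j k l :=
          sum_congr rfl fun i _ => sum_congr rfl fun j _ => by
            rw [sum_sum_apply_add_eq_sum_sum (fun l k => q i j k l) τ, Finset.sum_comm]
  have hd : ∑ h : Fin n, ∑ l, d (τ l + h) l = ∑ k, ∑ l, d k l := by
    rw [sum_sum_apply_add_eq_sum_sum (fun l k => d k l), Finset.sum_comm]
  simp only [f2, sum_add_distrib, sum_const, card_univ, Fintype.card_fin, nsmul_eq_mul,
    ← mul_sum, hq, hd, sum_sum_apply_add_eq_sum_sum c σ]

theorem exists_shift_A2_le_f2 (q : Fin m → Fin m → Fin n → Fin n → ℝ) (c : Fin m → Fin m → ℝ)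
    (d : Fin n → Fin n → ℝ) (σ : Fin m → Fin m) (τ : Fin n → Fin n) :
    ∃ g h, A2 q c d ≤ f2 q c d (fun i => σ i + g) (fun l => τ l + h) := by
  have hm : (m : ℝ) ≠ 0 := NeZero.ne _
  have hn : (n : ℝ) ≠ 0 := NeZero.ne _
  have hsum : ∑ _g : Fin m, ∑ _h : Fin n, A2 q c d
      = ∑ g : Fin m, ∑ h : Fin n, f2 q c d (fun i => σ i + g) (fun l => τ l + h) := by
    rw [sum_f2_shift]
    simp only [sum_const, card_univ, Fintype.card_fin, nsmul_eq_mul, A2]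
    field_simp
  simp_rw [← Fintype.sum_prod_type'] at hsum
  obtain ⟨⟨g, h⟩, -, hgh⟩ := exists_le_of_sum_le univ_nonempty hsum.le
  exact ⟨g, h, hgh⟩

def shiftHom (m n : ℕ) [NeZero m] [NeZero n] :
    Fin m × Fin n →+ (Fin m → Fin m) × (Fin n → Fin n) :=
  (Pi.constAddMonoidHom (Fin m) (Fin m)).prodMap (Pi.constAddMonoidHom (Fin n) (Fin n))

theorem card_quotient_range_shiftHom :
    Nat.card (((Fin m → Fin m) × (Fin n → Fin n)) ⧸ (shiftHom m n).range)
      = m ^ (m - 1) * n ^ (n - 1) := by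
  have hinj : Injective (shiftHom m n) := const_injective.prodMap const_injective
  have h := (shiftHom m n).card_quotient_range_mul_card hinj
  simp only [Nat.card_eq_fintype_card, Fintype.card_prod, Fintype.card_fun,
    Fintype.card_fin] at h ⊢
  refine Nat.eq_of_mul_eq_mul_right (Nat.mul_pos (NeZero.pos m) (NeZero.pos n)) ?_
  rw [h, ← pow_sub_one_mul (NeZero.ne m), ← pow_sub_one_mul (NeZero.ne n)]
  ring

end Shifts

theorem domination_BQAP2 (m n : ℕ) (hm : 0 < m) (hn : 0 < n)
    (q : Fin m → Fin m → Fin n → Fin n → ℝ)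
    (c : Fin m → Fin m → ℝ) (d : Fin n → Fin n → ℝ) :
    m ^ (m - 1) * n ^ (n - 1) ≤
      {στ : (Fin m → Fin m) × (Fin n → Fin n) |
        f2 q c d στ.1 στ.2 ≥ A2 q c d}.ncard := by
  have : NeZero m := ⟨hm.ne'⟩
  have : NeZero n := ⟨hn.ne'⟩
  rw [← card_quotient_range_shiftHom]
  refine AddSubgroup.card_quotient_le_ncard_of_forall_exists_add_mem _ fun ⟨σ, τ⟩ => ?_
  obtain ⟨g, h, hgh⟩ := exists_shift_A2_le_f2 q c d σ τ
  exact ⟨shiftHom m n (g, h), ⟨(g, h), rfl⟩, hgh⟩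
end

section
/- The bound n^{m-1}·m^{n-1} on the number of no-better-than-average solutions of BQAP1 is tight: for all positive integers m, n and all fixed indices i0 k0 : Fin m, j0 l0 : Fin n, if q is the array with q i0 j0 k0 l0 = 1 and all other entries 0, and c and d are zero matrices, then the number of feasible solutions (σ,τ) with f1(σ,τ) ≥ A1(q,c,d) is exactly n^{m-1}·m^{n-1}. -/
/-- Functions with one fixed value correspond to functions on the complement. -/
def fixEquiv {α β : Type*} [DecidableEq α] (a : α) (b : β) :
    {f : α → β // f a = b} ≃ ({x : α // x ≠ a} → β) where
  toFun f x := f.1 x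
  invFun g := ⟨fun x => if h : x = a then b else g ⟨x, h⟩, by simp⟩
  left_inv f := by
    ext x
    dsimp
    split
    · next h => rw [h, f.2]
    · rfl
  right_inv g := by
    funext x
    simp [x.2]

lemma card_fix {α β : Type*} [DecidableEq α] [Fintype α] [Fintype β] (a : α) (b : β) :
    Nat.card {f : α → β // f a = b} = Fintype.card β ^ (Fintype.card α - 1) := by
  rw [Nat.card_congr (fixEquiv a b), Nat.card_eq_fintype_card, Fintype.card_fun]
  congr 1
  rw [Fintype.card_subtype_compl, Fintype.card_subtype_eq]

theorem domination_BQAP1_tight (m n : ℕ) (hm : 0 < m) (hn : 0 < n)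
    (i0 k0 : Fin m) (j0 l0 : Fin n)
    (q : Fin m → Fin n → Fin m → Fin n → ℝ)
    (hq : q = fun i j k l => if i = i0 ∧ j = j0 ∧ k = k0 ∧ l = l0 then 1 else 0)
    (c d : Fin m → Fin n → ℝ) (hc : c = 0) (hd : d = 0) :
    {στ : (Fin m → Fin n) × (Fin n → Fin m) |
        f1 q c d στ.1 στ.2 ≥ A1 q c d}.ncard = n ^ (m - 1) * m ^ (n - 1) := by
  subst hq hc hd
  have hmn : (0:ℝ) < (m:ℝ) * n := by positivity
  have hA : A1 (fun i j k l => if i = i0 ∧ j = j0 ∧ k = k0 ∧ l = l0 then (1:ℝ) else 0)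
      (0 : Fin m → Fin n → ℝ) (0 : Fin m → Fin n → ℝ) = 1 / ((m:ℝ) * n) := by
    simp [A1, ite_and]
  have hf : ∀ (σ : Fin m → Fin n) (τ : Fin n → Fin m),
      f1 (fun i j k l => if i = i0 ∧ j = j0 ∧ k = k0 ∧ l = l0 then (1:ℝ) else 0)
        (0 : Fin m → Fin n → ℝ) (0 : Fin m → Fin n → ℝ) σ τ
      = if σ i0 = j0 ∧ τ l0 = k0 then 1 else 0 := by
    intro σ τ
    simp only [f1, Pi.zero_apply, Finset.sum_const_zero, add_zero]
    rw [Finset.sum_eq_single i0]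
    · rw [Finset.sum_eq_single l0]
      · by_cases h : σ i0 = j0 ∧ τ l0 = k0
        · simp [h.1, h.2]
        · push_neg at h
          by_cases h1 : σ i0 = j0
          · simp [h1, h h1]
          · simp [h1]
      · intro l _ hl; simp [hl]
      · simp
    · intro i _ hi
      apply Finset.sum_eq_zero
      intro l _
      simp [hi]
    · simp
  have hS : {στ : (Fin m → Fin n) × (Fin n → Fin m) |
      f1 (fun i j k l => if i = i0 ∧ j = j0 ∧ k = k0 ∧ l = l0 then (1:ℝ) else 0)
        (0 : Fin m → Fin n → ℝ) (0 : Fin m → Fin n → ℝ) στ.1 στ.2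
      ≥ A1 (fun i j k l => if i = i0 ∧ j = j0 ∧ k = k0 ∧ l = l0 then (1:ℝ) else 0)
        (0 : Fin m → Fin n → ℝ) (0 : Fin m → Fin n → ℝ)}
      = {σ : Fin m → Fin n | σ i0 = j0} ×ˢ {τ : Fin n → Fin m | τ l0 = k0} := by
    ext στ
    simp only [Set.mem_setOf_eq, hf, hA, Set.mem_prod]
    constructor
    · intro h
      by_contra hcon
      rw [if_neg hcon] at h
      have : (0:ℝ) < 1 / ((m:ℝ) * n) := by positivity
      linarith
    · intro h
      rw [if_pos h]
      rw [ge_iff_le, div_le_one hmn]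
      have h1 : (1:ℝ) ≤ (m:ℝ) := by exact_mod_cast hm
      have h2 : (1:ℝ) ≤ (n:ℝ) := by exact_mod_cast hn
      nlinarith
  rw [hS, ← Nat.card_coe_set_eq, Nat.card_congr (Equiv.Set.prod _ _), Nat.card_prod]
  have e1 : {σ : Fin m → Fin n | σ i0 = j0} ≃ {f : Fin m → Fin n // f i0 = j0} := Equiv.refl _
  have e2 : {τ : Fin n → Fin m | τ l0 = k0} ≃ {f : Fin n → Fin m // f l0 = k0} := Equiv.refl _
  rw [Nat.card_congr e1, Nat.card_congr e2, card_fix, card_fix]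
  simp
end

section
/- For all positive integers m, n, every BQAP1 instance (q, c, d), and every feasible solution (σ,τ): ∑_{a : Fin n} ∑_{b : Fin m} f1(σ_a, τ_b) = m·n·A1(q,c,d), where σ_a(i) = σ(i) + a and τ_b(l) = τ(l) + b (addition in Fin n and Fin m, i.e. cyclic shifts modulo n and m). -/
/-!
Every cyclic shift `j ↦ x + j` permutes `Fin n`, so as the row (resp. column) assignment runs
through its shifts, every entry of `σ` (resp. `τ`) takes each value exactly once.
Hence each of the three parts of `f1` summed over all `n * m` shifts becomes the full sum
of the corresponding cost array, the linear parts picking up the factor of the shift they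
do not depend on.
-/

open Finset

section Shifts

variable {M : Type*} [AddCommMonoid M] {n : ℕ}

theorem Fin.sum_comp_add_left (g : Fin n → M) (x : Fin n) : ∑ a, g (x + a) = ∑ j, g j :=
  have : NeZero n := NeZero.of_pos x.pos
  Equiv.sum_comp (Equiv.addLeft x) g

theorem Fin.sum_sum_comp_add {ι : Type*} [Fintype ι] (g : ι → Fin n → M) (σ : ι → Fin n) :
    ∑ a, ∑ i, g i (σ i + a) = ∑ i, ∑ j, g i j := by
  rw [sum_comm]
  exact Fintype.sum_congr _ _ fun i => Fin.sum_comp_add_left (g i) (σ i)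

end Shifts

section BQAP1

variable {m n : ℕ} (q : Fin m → Fin n → Fin m → Fin n → ℝ)

theorem sum_shifts_col (d : Fin m → Fin n → ℝ) (τ : Fin n → Fin m) :
    ∑ b, ∑ l, d (τ l + b) l = ∑ i, ∑ j, d i j := by
  rw [Fin.sum_sum_comp_add (fun l k => d k l) τ, sum_comm]

theorem sum_shifts_quadratic (σ : Fin m → Fin n) (τ : Fin n → Fin m) :
    ∑ a, ∑ b, ∑ i, ∑ l, q i (σ i + a) (τ l + b) l = ∑ i, ∑ j, ∑ k, ∑ l, q i j k l := by
  have inner (a : Fin n) : ∑ b, ∑ i, ∑ l, q i (σ i + a) (τ l + b) l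
      = ∑ i, ∑ l, ∑ k, q i (σ i + a) k l := by
    rw [sum_comm]
    exact Fintype.sum_congr _ _ fun i =>
      Fin.sum_sum_comp_add (fun l k => q i (σ i + a) k l) τ
  simp only [inner]
  rw [Fin.sum_sum_comp_add (fun i j => ∑ l, ∑ k, q i j k l) σ]
  exact Fintype.sum_congr _ _ fun i => Fintype.sum_congr _ _ fun j => sum_comm

theorem natCast_mul_natCast_mul_A1 (c d : Fin m → Fin n → ℝ) :
    (m : ℝ) * n * A1 q c d
      = ∑ i, ∑ j, ∑ k, ∑ l, q i j k l + m * ∑ i, ∑ j, c i j + n * ∑ i, ∑ j, d i j := by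
  rcases m.eq_zero_or_pos with rfl | hm
  · simp
  rcases n.eq_zero_or_pos with rfl | hn
  · simp
  have : (m : ℝ) ≠ 0 := by positivity
  have : (n : ℝ) ≠ 0 := by positivity
  simp only [A1]
  field_simp

end BQAP1

theorem sum_over_shifts_BQAP1_general (m n : ℕ)
    (q : Fin m → Fin n → Fin m → Fin n → ℝ) (c d : Fin m → Fin n → ℝ)
    (σ : Fin m → Fin n) (τ : Fin n → Fin m) :
    (∑ a : Fin n, ∑ b : Fin m,
        f1 q c d (fun i => σ i + a) (fun l => τ l + b)) =
      (m : ℝ) * n * A1 q c d := by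
  simp only [f1, sum_add_distrib, sum_const, card_univ, Fintype.card_fin, nsmul_eq_mul]
  rw [sum_shifts_quadratic, ← mul_sum, Fin.sum_sum_comp_add c σ, sum_shifts_col,
    natCast_mul_natCast_mul_A1]

theorem sum_over_shifts_BQAP1 (m n : ℕ) (hm : 0 < m) (hn : 0 < n)
    (q : Fin m → Fin n → Fin m → Fin n → ℝ) (c d : Fin m → Fin n → ℝ)
    (σ : Fin m → Fin n) (τ : Fin n → Fin m) :
    (∑ a : Fin n, ∑ b : Fin m,
        f1 q c d (fun i => σ i + a) (fun l => τ l + b)) =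
      (m : ℝ) * n * A1 q c d :=
  sum_over_shifts_BQAP1_general m n q c d σ τ
end

section
/- For all positive integers m, n and every BQAP1 instance (q, c, d): min over a : Fin n, b : Fin m of f1(σ^a, τ^b) ≤ A1(q,c,d) ≤ max over a : Fin n, b : Fin m of f1(σ^a, τ^b), where (σ^a, τ^b) is the constant feasible solution with σ^a(i) = a for all i and τ^b(l) = b for all l. -/
/-!
Averaging over the `n * m` constant solutions `(σ^a, τ^b)` recovers `A1` exactly: summed over all
pairs `(a, b)`, the quadratic part `∑ i, ∑ l, q i a b l` runs once through every entry of `q`, while the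
linear parts count every entry of `c` `m` times and every entry of `d` `n` times. An average lies
between the minimum and the maximum of the averaged values.
-/

open Finset
open scoped BigOperators

namespace Finset

variable {ι α : Type*} [AddCommMonoid α] [LinearOrder α] [IsOrderedAddMonoid α] [Module ℚ≥0 α]
  [PosSMulMono ℚ≥0 α] {s : Finset ι}

lemma inf'_le_expect (hs : s.Nonempty) (f : ι → α) : s.inf' hs f ≤ 𝔼 i ∈ s, f i :=
  le_expect hs fun _ hi => inf'_le f hi

lemma expect_le_sup' (hs : s.Nonempty) (f : ι → α) : 𝔼 i ∈ s, f i ≤ s.sup' hs f :=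
  expect_le hs fun _ hi => le_sup' f hi

end Finset

section BQAP1

variable {m n : ℕ} (q : Fin m → Fin n → Fin m → Fin n → ℝ) (c d : Fin m → Fin n → ℝ)

lemma sum_f1_const :
    ∑ ab : Fin n × Fin m, f1 q c d (fun _ => ab.1) (fun _ => ab.2) =
      ∑ i, ∑ j, ∑ k, ∑ l, q i j k l + m * ∑ i, ∑ j, c i j + n * ∑ i, ∑ j, d i j := by
  simp only [f1, Fintype.sum_prod_type, sum_add_distrib, sum_const, card_univ, Fintype.card_fin,
    nsmul_eq_mul, ← mul_sum]
  rw [sum_comm_cycle, sum_comm (f := fun a i => c i a)]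

lemma A1_eq_expect_f1_const (hm : 0 < m) (hn : 0 < n) :
    A1 q c d = 𝔼 ab : Fin n × Fin m, f1 q c d (fun _ => ab.1) (fun _ => ab.2) := by
  have hm' : (m : ℝ) ≠ 0 := Nat.cast_ne_zero.mpr hm.ne'
  have hn' : (n : ℝ) ≠ 0 := Nat.cast_ne_zero.mpr hn.ne'
  rw [Fintype.expect_eq_sum_div_card, sum_f1_const, A1, Fintype.card_prod, Fintype.card_fin,
    Fintype.card_fin, Nat.cast_mul]
  field_simp

end BQAP1

theorem min_max_constant_solutions_BQAP1 (m n : ℕ) (hm : 0 < m) (hn : 0 < n)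
    (q : Fin m → Fin n → Fin m → Fin n → ℝ) (c d : Fin m → Fin n → ℝ) :
    Finset.univ.inf' ⟨((⟨0, hn⟩ : Fin n), (⟨0, hm⟩ : Fin m)), Finset.mem_univ _⟩
        (fun ab : Fin n × Fin m => f1 q c d (fun _ => ab.1) (fun _ => ab.2))
      ≤ A1 q c d ∧
    A1 q c d ≤
      Finset.univ.sup' ⟨((⟨0, hn⟩ : Fin n), (⟨0, hm⟩ : Fin m)), Finset.mem_univ _⟩
        (fun ab : Fin n × Fin m => f1 q c d (fun _ => ab.1) (fun _ => ab.2)) := by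
  rw [A1_eq_expect_f1_const q c d hm hn]
  exact ⟨inf'_le_expect _ _, expect_le_sup' _ _⟩
end

section
/- Locally optimal solutions of BQAP1 under swap and concurrent swap neighborhoods can be arbitrarily bad and worse than the average: for all integers m, n ≥ 2 and all reals L > 0 and ε > 0 with L > 2·m·n·ε, there exist a BQAP1 instance (q, c, d) and a feasible solution (σ0, τ0) such that (i) f1(σ', τ0) ≥ f1(σ0, τ0) for every σ' : Fin m → Fin n, (ii) f1(σ0, τ') ≥ f1(σ0, τ0) for every τ' : Fin n → Fin m (so (σ0,τ0) is locally optimal for both the swap and the concurrent swap neighborhood), (iii) f1(σ0, τ0) = -2·ε, (iv) f1(σ0, τ0) > A1(q,c,d), and (v) there exists a feasible solution (σ, τ) with f1(σ, τ) ≤ -L. -/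
/-!
Take `c = d = 0` and a quadratic cost `q i j k l = g j k` that only sees the column
`j = σ i` and the row `k = τ l`, so that `f1 σ τ = ∑ i, ∑ l, g (σ i) (τ l)`. Let `g` vanish except
for a small negative entry `a` at `(j₀, k₀)` and a large negative entry `b` at `(j₁, k₁)`, with
`j₀ ≠ j₁` and `k₀ ≠ k₁`. At the constant solution `(j₀, k₀)` every entry `g j k₀` and `g j₀ k` is
`a` or `0`, so no change of `σ` alone or of `τ` alone can help, while the constant solution
`(j₁, k₁)` has value `m n b`. The average is `a + b`, which lies below `m n a` as soon as
`-b > (m n - 1) (-a)`; with `m n a = -2ε` and `m n b = -L` this is guaranteed by `L > 2 m n ε`.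
-/

section CostOfPair

variable {m n : ℕ}

def costOfPair (g : Fin n → Fin m → ℝ) : Fin m → Fin n → Fin m → Fin n → ℝ :=
  fun _ j k _ => g j k

theorem f1_costOfPair (g : Fin n → Fin m → ℝ) (σ : Fin m → Fin n) (τ : Fin n → Fin m) :
    f1 (costOfPair g) 0 0 σ τ = ∑ i, ∑ l, g (σ i) (τ l) := by
  simp [f1, costOfPair]

theorem f1_costOfPair_const (g : Fin n → Fin m → ℝ) (j : Fin n) (k : Fin m) :
    f1 (costOfPair g) 0 0 (fun _ => j) (fun _ => k) = m * n * g j k := by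
  simp [f1_costOfPair, mul_assoc]

theorem A1_costOfPair (hm : m ≠ 0) (hn : n ≠ 0) (g : Fin n → Fin m → ℝ) :
    A1 (costOfPair g) 0 0 = ∑ j, ∑ k, g j k := by
  simp only [A1, costOfPair, Finset.sum_const, Finset.card_univ, Fintype.card_fin, nsmul_eq_mul,
    ← Finset.mul_sum, Pi.zero_apply, mul_zero, add_zero]
  field_simp

theorem f1_costOfPair_const_le_of_col {g : Fin n → Fin m → ℝ} {j₀ : Fin n} {k₀ : Fin m}
    (h : ∀ j, g j₀ k₀ ≤ g j k₀) (σ : Fin m → Fin n) :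
    f1 (costOfPair g) 0 0 (fun _ => j₀) (fun _ => k₀) ≤ f1 (costOfPair g) 0 0 σ (fun _ => k₀) := by
  simp only [f1_costOfPair]
  gcongr with i _ l _
  exact h (σ i)

theorem f1_costOfPair_const_le_of_row {g : Fin n → Fin m → ℝ} {j₀ : Fin n} {k₀ : Fin m}
    (h : ∀ k, g j₀ k₀ ≤ g j₀ k) (τ : Fin n → Fin m) :
    f1 (costOfPair g) 0 0 (fun _ => j₀) (fun _ => k₀) ≤ f1 (costOfPair g) 0 0 (fun _ => j₀) τ := by
  simp only [f1_costOfPair]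
  gcongr with i _ l _
  exact h (τ l)

end CostOfPair

section TwoPointCost

variable {α β : Type*} [DecidableEq α] [DecidableEq β]

def twoPointCost (j₀ j₁ : α) (k₀ k₁ : β) (a b : ℝ) (j : α) (k : β) : ℝ :=
  (if j = j₀ ∧ k = k₀ then a else 0) + (if j = j₁ ∧ k = k₁ then b else 0)

variable {j₀ j₁ : α} {k₀ k₁ : β} {a b : ℝ}

theorem twoPointCost_apply_left (hj : j₀ ≠ j₁) : twoPointCost j₀ j₁ k₀ k₁ a b j₀ k₀ = a := by
  simp [twoPointCost, hj]

theorem twoPointCost_apply_right (hj : j₀ ≠ j₁) : twoPointCost j₀ j₁ k₀ k₁ a b j₁ k₁ = b := by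
  simp [twoPointCost, hj.symm]

theorem le_twoPointCost_col (ha : a ≤ 0) (hk : k₀ ≠ k₁) (j : α) :
    a ≤ twoPointCost j₀ j₁ k₀ k₁ a b j k₀ := by
  by_cases h : j = j₀ <;> simp [twoPointCost, h, hk, ha]

theorem le_twoPointCost_row (ha : a ≤ 0) (hj : j₀ ≠ j₁) (k : β) :
    a ≤ twoPointCost j₀ j₁ k₀ k₁ a b j₀ k := by
  by_cases h : k = k₀ <;> simp [twoPointCost, h, hj, ha]

theorem sum_twoPointCost [Fintype α] [Fintype β] :
    ∑ j, ∑ k, twoPointCost j₀ j₁ k₀ k₁ a b j k = a + b := by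
  simp [twoPointCost, Finset.sum_add_distrib, ite_and, Finset.sum_ite_eq']

end TwoPointCost

theorem swap_local_optimum_arbitrarily_bad_BQAP1_general (m n : ℕ) (hm : 2 ≤ m) (hn : 2 ≤ n)
    (L ε : ℝ) (hε : 0 < ε) (hLε : L > 2 * m * n * ε) :
    ∃ (q : Fin m → Fin n → Fin m → Fin n → ℝ) (c d : Fin m → Fin n → ℝ)
      (σ0 : Fin m → Fin n) (τ0 : Fin n → Fin m),
      (∀ σ' : Fin m → Fin n, f1 q c d σ' τ0 ≥ f1 q c d σ0 τ0) ∧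
      (∀ τ' : Fin n → Fin m, f1 q c d σ0 τ' ≥ f1 q c d σ0 τ0) ∧
      f1 q c d σ0 τ0 = -2 * ε ∧
      f1 q c d σ0 τ0 > A1 q c d ∧
      (∃ (σ : Fin m → Fin n) (τ : Fin n → Fin m), f1 q c d σ τ ≤ -L) := by
  have hmn : (0 : ℝ) < m * n := by positivity
  let j₀ : Fin n := ⟨0, by omega⟩
  let j₁ : Fin n := ⟨1, by omega⟩
  let k₀ : Fin m := ⟨0, by omega⟩
  let k₁ : Fin m := ⟨1, by omega⟩
  have hj : j₀ ≠ j₁ := by simp [j₀, j₁, Fin.ext_iff]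
  have hk : k₀ ≠ k₁ := by simp [k₀, k₁, Fin.ext_iff]
  set a := -2 * ε / (m * n)
  set b := -L / (m * n)
  have ha : a ≤ 0 := div_nonpos_of_nonpos_of_nonneg (by linarith) hmn.le
  have hma : m * n * a = -2 * ε := mul_div_cancel₀ _ hmn.ne'
  have hmb : m * n * b = -L := mul_div_cancel₀ _ hmn.ne'
  refine ⟨costOfPair (twoPointCost j₀ j₁ k₀ k₁ a b), 0, 0, fun _ => j₀, fun _ => k₀,
    f1_costOfPair_const_le_of_col fun j => ?_, f1_costOfPair_const_le_of_row fun k => ?_,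
    ?_, ?_, fun _ => j₁, fun _ => k₁, ?_⟩
  · exact (twoPointCost_apply_left hj).trans_le (le_twoPointCost_col ha hk j)
  · exact (twoPointCost_apply_left hj).trans_le (le_twoPointCost_row ha hj k)
  · rw [f1_costOfPair_const, twoPointCost_apply_left hj, hma]
  · rw [f1_costOfPair_const, A1_costOfPair (by omega) (by omega), sum_twoPointCost,
      twoPointCost_apply_left hj, hma, gt_iff_lt, ← mul_lt_mul_iff_right₀ hmn, mul_add, hma, hmb]
    linarith
  · rw [f1_costOfPair_const, twoPointCost_apply_right hj, hmb]

theorem swap_local_optimum_arbitrarily_bad_BQAP1 (m n : ℕ) (hm : 2 ≤ m) (hn : 2 ≤ n)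
    (L ε : ℝ) (hL : 0 < L) (hε : 0 < ε) (hLε : L > 2 * m * n * ε) :
    ∃ (q : Fin m → Fin n → Fin m → Fin n → ℝ) (c d : Fin m → Fin n → ℝ)
      (σ0 : Fin m → Fin n) (τ0 : Fin n → Fin m),
      (∀ σ' : Fin m → Fin n, f1 q c d σ' τ0 ≥ f1 q c d σ0 τ0) ∧
      (∀ τ' : Fin n → Fin m, f1 q c d σ0 τ' ≥ f1 q c d σ0 τ0) ∧
      f1 q c d σ0 τ0 = -2 * ε ∧
      f1 q c d σ0 τ0 > A1 q c d ∧
      (∃ (σ : Fin m → Fin n) (τ : Fin n → Fin m), f1 q c d σ τ ≤ -L) :=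
  swap_local_optimum_arbitrarily_bad_BQAP1_general m n hm hn L ε hε hLε
end

section
/- Rounding a fractional solution of the bilinear relaxation of BQAP1 by the round-x optimize-y procedure does not increase the objective: let m, n be positive integers, (q, c, d) a BQAP1 instance, and x y : Fin m → Fin n → ℝ with all entries nonnegative, ∑_{j} x i j = 1 for every i : Fin m, and ∑_{k} y k l = 1 for every l : Fin n. Suppose σ : Fin m → Fin n satisfies, for every i and every j : Fin n, c i (σ i) + ∑_{k,l} q i (σ i) k l · y k l ≤ c i j + ∑_{k,l} q i j k l · y k l, and τ : Fin n → Fin m satisfies, for every l and every k : Fin m, d (τ l) l + ∑_{i} q i (σ i) (τ l) l ≤ d k l + ∑_{i} q i (σ i) k l. Then f1(σ,τ) ≤ F1(x,y). -/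
/-- Objective function of the bilinear relaxation BLP1. -/
noncomputable def F1 {m n : ℕ} (q : Fin m → Fin n → Fin m → Fin n → ℝ)
    (c d : Fin m → Fin n → ℝ) (x y : Fin m → Fin n → ℝ) : ℝ :=
  (∑ i, ∑ j, ∑ k, ∑ l, q i j k l * x i j * y k l)
    + (∑ i, ∑ j, c i j * x i j) + (∑ k, ∑ l, d k l * y k l)


/-!
Write `x_σ`, `y_τ` for the 0/1 matrices of `σ` and `τ`, so that `f1 σ τ = F1 x_σ y_τ`.
For fixed `y`, `F1 · y` is affine with coefficient `c i j + ∑ k l, q i j k l * y k l` on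
`x i j`; since each row of `x` is a probability vector, choosing a row-wise minimiser `σ`
gives `F1 x_σ y ≤ F1 x y`. Symmetrically `F1 x_σ ·` is affine in `y`, with column-wise
minimiser `τ`, so `F1 x_σ y_τ ≤ F1 x_σ y`.
-/

open Finset

theorem le_sum_mul_of_forall_le {ι R : Type*} [Fintype ι] [Semiring R] [PartialOrder R]
    [IsOrderedRing R] (w a : ι → R) (j₀ : ι) (hw0 : ∀ j, 0 ≤ w j) (hw1 : ∑ j, w j = 1)
    (ha : ∀ j, a j₀ ≤ a j) : a j₀ ≤ ∑ j, w j * a j :=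
  calc a j₀ = ∑ j, w j * a j₀ := by rw [← sum_mul, hw1, one_mul]
    _ ≤ ∑ j, w j * a j := sum_le_sum fun j _ => mul_le_mul_of_nonneg_left (ha j) (hw0 j)

theorem sum_comm_pairs {α β γ δ M : Type*} [Fintype α] [Fintype β] [Fintype γ]
    [Fintype δ] [AddCommMonoid M] (g : α → β → γ → δ → M) :
    ∑ a, ∑ b, ∑ c, ∑ d, g a b c d = ∑ d, ∑ c, ∑ a, ∑ b, g a b c d :=
  calc _ = ∑ a, ∑ d, ∑ b, ∑ c, g a b c d := sum_congr rfl fun _ _ => sum_comm_cycle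
    _ = ∑ d, ∑ a, ∑ b, ∑ c, g a b c d := sum_comm
    _ = _ := sum_congr rfl fun _ _ => sum_comm_cycle

section BQAP1

variable {m n : ℕ} (q : Fin m → Fin n → Fin m → Fin n → ℝ) (c d : Fin m → Fin n → ℝ)

def rowAssignment (σ : Fin m → Fin n) : Fin m → Fin n → ℝ :=
  fun i j => if σ i = j then 1 else 0

theorem sum_rowAssignment_mul (σ : Fin m → Fin n) (i : Fin m) (a : Fin n → ℝ) :
    ∑ j, rowAssignment σ i j * a j = a (σ i) := by
  simp [rowAssignment]

def colAssignment (τ : Fin n → Fin m) : Fin m → Fin n → ℝ :=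
  fun k l => if τ l = k then 1 else 0

theorem sum_colAssignment_mul (τ : Fin n → Fin m) (l : Fin n) (b : Fin m → ℝ) :
    ∑ k, colAssignment τ k l * b k = b (τ l) := by
  simp [colAssignment]

theorem F1_eq_sum_mul_coeff_left (x y : Fin m → Fin n → ℝ) :
    F1 q c d x y = (∑ i, ∑ j, x i j * (c i j + ∑ k, ∑ l, q i j k l * y k l))
      + ∑ k, ∑ l, y k l * d k l := by
  simp only [F1, mul_add, mul_sum, sum_add_distrib, mul_comm, mul_left_comm]
  ring

theorem F1_eq_sum_mul_coeff_right (x y : Fin m → Fin n → ℝ) :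
    F1 q c d x y = (∑ i, ∑ j, x i j * c i j)
      + ∑ l, ∑ k, y k l * (d k l + ∑ i, ∑ j, x i j * q i j k l) := by
  simp only [F1, mul_add, mul_sum, sum_add_distrib]
  rw [sum_comm_pairs, sum_comm (f := fun k l => d k l * y k l)]
  simp only [mul_comm, mul_left_comm]
  ring

theorem f1_eq_F1_assignment (σ : Fin m → Fin n) (τ : Fin n → Fin m) :
    f1 q c d σ τ = F1 q c d (rowAssignment σ) (colAssignment τ) := by
  simp only [F1_eq_sum_mul_coeff_right, sum_rowAssignment_mul, sum_colAssignment_mul,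
    f1, sum_add_distrib]
  rw [sum_comm (f := fun i l => q i (σ i) (τ l) l)]
  ring

theorem F1_rowAssignment_le (x y : Fin m → Fin n → ℝ) (hx0 : ∀ i j, 0 ≤ x i j)
    (hx1 : ∀ i, ∑ j, x i j = 1) (σ : Fin m → Fin n)
    (hσ : ∀ i j, c i (σ i) + ∑ k, ∑ l, q i (σ i) k l * y k l ≤
      c i j + ∑ k, ∑ l, q i j k l * y k l) :
    F1 q c d (rowAssignment σ) y ≤ F1 q c d x y := by
  simp only [F1_eq_sum_mul_coeff_left, sum_rowAssignment_mul]
  gcongr with i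
  exact le_sum_mul_of_forall_le (x i) (fun j => c i j + ∑ k, ∑ l, q i j k l * y k l) (σ i)
    (hx0 i) (hx1 i) (hσ i)

theorem F1_colAssignment_le (x y : Fin m → Fin n → ℝ) (hy0 : ∀ k l, 0 ≤ y k l)
    (hy1 : ∀ l, ∑ k, y k l = 1) (τ : Fin n → Fin m)
    (hτ : ∀ l k, d (τ l) l + ∑ i, ∑ j, x i j * q i j (τ l) l ≤
      d k l + ∑ i, ∑ j, x i j * q i j k l) :
    F1 q c d x (colAssignment τ) ≤ F1 q c d x y := by
  simp only [F1_eq_sum_mul_coeff_right, sum_colAssignment_mul]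
  gcongr with l
  exact le_sum_mul_of_forall_le (y · l) (fun k => d k l + ∑ i, ∑ j, x i j * q i j k l) (τ l)
    (hy0 · l) (hy1 l) (hτ l)

end BQAP1

theorem rounding_RxOy_BQAP1_general (m n : ℕ)
    (q : Fin m → Fin n → Fin m → Fin n → ℝ) (c d : Fin m → Fin n → ℝ)
    (x y : Fin m → Fin n → ℝ)
    (hx0 : ∀ i j, 0 ≤ x i j) (hy0 : ∀ k l, 0 ≤ y k l)
    (hx1 : ∀ i, (∑ j, x i j) = 1) (hy1 : ∀ l, (∑ k, y k l) = 1)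
    (σ : Fin m → Fin n)
    (hσ : ∀ (i : Fin m) (j : Fin n),
      c i (σ i) + ∑ k, ∑ l, q i (σ i) k l * y k l ≤
        c i j + ∑ k, ∑ l, q i j k l * y k l)
    (τ : Fin n → Fin m)
    (hτ : ∀ (l : Fin n) (k : Fin m),
      d (τ l) l + ∑ i, q i (σ i) (τ l) l ≤ d k l + ∑ i, q i (σ i) k l) :
    f1 q c d σ τ ≤ F1 q c d x y :=
  calc f1 q c d σ τ = F1 q c d (rowAssignment σ) (colAssignment τ) := f1_eq_F1_assignment ..
    _ ≤ F1 q c d (rowAssignment σ) y :=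
      F1_colAssignment_le q c d _ y hy0 hy1 τ (by simpa only [sum_rowAssignment_mul] using hτ)
    _ ≤ F1 q c d x y := F1_rowAssignment_le q c d x y hx0 hx1 σ hσ

theorem rounding_RxOy_BQAP1 (m n : ℕ) (hm : 0 < m) (hn : 0 < n)
    (q : Fin m → Fin n → Fin m → Fin n → ℝ) (c d : Fin m → Fin n → ℝ)
    (x y : Fin m → Fin n → ℝ)
    (hx0 : ∀ i j, 0 ≤ x i j) (hy0 : ∀ k l, 0 ≤ y k l)
    (hx1 : ∀ i, (∑ j, x i j) = 1) (hy1 : ∀ l, (∑ k, y k l) = 1)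
    (σ : Fin m → Fin n)
    (hσ : ∀ (i : Fin m) (j : Fin n),
      c i (σ i) + ∑ k, ∑ l, q i (σ i) k l * y k l ≤
        c i j + ∑ k, ∑ l, q i j k l * y k l)
    (τ : Fin n → Fin m)
    (hτ : ∀ (l : Fin n) (k : Fin m),
      d (τ l) l + ∑ i, q i (σ i) (τ l) l ≤ d k l + ∑ i, q i (σ i) k l) :
    f1 q c d σ τ ≤ F1 q c d x y :=
  rounding_RxOy_BQAP1_general m n q c d x y hx0 hy0 hx1 hy1 σ hσ τ hτ
end

section
/- Rounding a fractional solution of the bilinear relaxation of BQAP2 by the round-x optimize-y procedure does not increase the objective: let m, n be positive integers, (q, c, d) a BQAP2 instance, and x : Fin m → Fin m → ℝ, y : Fin n → Fin n → ℝ with all entries nonnegative, ∑_{j} x i j = 1 for every i : Fin m, and ∑_{k} y k l = 1 for every l : Fin n. Suppose σ : Fin m → Fin m satisfies, for every i and every j : Fin m, c i (σ i) + ∑_{k,l} q i (σ i) k l · y k l ≤ c i j + ∑_{k,l} q i j k l · y k l, and τ : Fin n → Fin n satisfies, for every l and every k : Fin n, d (τ l) l + ∑_{i} q i (σ i) (τ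 l) l ≤ d k l + ∑_{i} q i (σ i) k l. Then f2(σ,τ) ≤ F2(x,y). -/
/-- Objective function of the bilinear relaxation BLP2. -/
noncomputable def F2 {m n : ℕ} (q : Fin m → Fin m → Fin n → Fin n → ℝ)
    (c : Fin m → Fin m → ℝ) (d : Fin n → Fin n → ℝ)
    (x : Fin m → Fin m → ℝ) (y : Fin n → Fin n → ℝ) : ℝ :=
  (∑ i, ∑ j, ∑ k, ∑ l, q i j k l * x i j * y k l)
    + (∑ i, ∑ j, c i j * x i j) + (∑ k, ∑ l, d k l * y k l)

lemma min_le_avg {α : Type*} [Fintype α] (w g : α → ℝ) (hw : ∀ t, 0 ≤ w t)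
    (h1 : ∑ t, w t = 1) (a : ℝ) (ha : ∀ t, a ≤ g t) : a ≤ ∑ t, w t * g t := by
  calc a = ∑ t, w t * a := by rw [← Finset.sum_mul, h1, one_mul]
  _ ≤ ∑ t, w t * g t :=
    Finset.sum_le_sum fun t _ => mul_le_mul_of_nonneg_left (ha t) (hw t)

theorem rounding_RxOy_BQAP2 (m n : ℕ) (hm : 0 < m) (hn : 0 < n)
    (q : Fin m → Fin m → Fin n → Fin n → ℝ)
    (c : Fin m → Fin m → ℝ) (d : Fin n → Fin n → ℝ)
    (x : Fin m → Fin m → ℝ) (y : Fin n → Fin n → ℝ)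
    (hx0 : ∀ i j, 0 ≤ x i j) (hy0 : ∀ k l, 0 ≤ y k l)
    (hx1 : ∀ i, (∑ j, x i j) = 1) (hy1 : ∀ l, (∑ k, y k l) = 1)
    (σ : Fin m → Fin m)
    (hσ : ∀ (i j : Fin m),
      c i (σ i) + ∑ k, ∑ l, q i (σ i) k l * y k l ≤
        c i j + ∑ k, ∑ l, q i j k l * y k l)
    (τ : Fin n → Fin n)
    (hτ : ∀ (l k : Fin n),
      d (τ l) l + ∑ i, q i (σ i) (τ l) l ≤ d k l + ∑ i, q i (σ i) k l) :
    f2 q c d σ τ ≤ F2 q c d x y := by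
  -- Step 1 bound
  have key1 : ∑ l, (d (τ l) l + ∑ i, q i (σ i) (τ l) l)
      ≤ ∑ l, ∑ k, y k l * (d k l + ∑ i, q i (σ i) k l) :=
    Finset.sum_le_sum fun l _ =>
      min_le_avg (fun k => y k l) _ (fun k => hy0 k l) (hy1 l) _ (hτ l)
  have key2 : ∑ i, (c i (σ i) + ∑ k, ∑ l, q i (σ i) k l * y k l)
      ≤ ∑ i, ∑ j, x i j * (c i j + ∑ k, ∑ l, q i j k l * y k l) :=
    Finset.sum_le_sum fun i _ =>
      min_le_avg (x i) _ (hx0 i) (hx1 i) _ (hσ i)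
  have e1 : ∑ l, ∑ k, y k l * (d k l + ∑ i, q i (σ i) k l)
      = (∑ k, ∑ l, d k l * y k l) + ∑ i, ∑ k, ∑ l, q i (σ i) k l * y k l := by
    rw [Finset.sum_comm]
    simp only [mul_add, Finset.mul_sum, Finset.sum_add_distrib]
    congr 1
    · exact Finset.sum_congr rfl fun k _ => Finset.sum_congr rfl fun l _ => mul_comm _ _
    · calc ∑ k, ∑ l, ∑ i, y k l * q i (σ i) k l
          = ∑ k, ∑ i, ∑ l, y k l * q i (σ i) k l :=
            Finset.sum_congr rfl fun k _ => Finset.sum_comm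
        _ = ∑ i, ∑ k, ∑ l, q i (σ i) k l * y k l := by
            rw [Finset.sum_comm]
            exact Finset.sum_congr rfl fun i _ => Finset.sum_congr rfl fun k _ =>
              Finset.sum_congr rfl fun l _ => mul_comm _ _
  have e2 : ∑ i, ∑ j, x i j * (c i j + ∑ k, ∑ l, q i j k l * y k l)
      = (∑ i, ∑ j, c i j * x i j)
        + ∑ i, ∑ j, ∑ k, ∑ l, q i j k l * x i j * y k l := by
    simp only [mul_add, Finset.mul_sum, Finset.sum_add_distrib]
    congr 1
    · exact Finset.sum_congr rfl fun i _ => Finset.sum_congr rfl fun j _ => mul_comm _ _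
    · exact Finset.sum_congr rfl fun i _ => Finset.sum_congr rfl fun j _ =>
        Finset.sum_congr rfl fun k _ => Finset.sum_congr rfl fun l _ => by ring
  have hswap : ∑ i, ∑ l, q i (σ i) (τ l) l = ∑ l, ∑ i, q i (σ i) (τ l) l :=
    Finset.sum_comm
  have hd1 : ∑ l, (d (τ l) l + ∑ i, q i (σ i) (τ l) l)
      = (∑ l, d (τ l) l) + ∑ l, ∑ i, q i (σ i) (τ l) l := Finset.sum_add_distrib
  have hd2 : ∑ i, (c i (σ i) + ∑ k, ∑ l, q i (σ i) k l * y k l)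
      = (∑ i, c i (σ i)) + ∑ i, ∑ k, ∑ l, q i (σ i) k l * y k l :=
    Finset.sum_add_distrib
  unfold f2 F2
  rw [hswap]
  rw [hd1] at key1
  rw [e1] at key1
  rw [hd2] at key2
  rw [e2] at key2
  linarith
end

section
/- For all positive integers m, n and every BQAP1 instance (q, c, d), there exists a feasible solution (σ,τ) with f1(σ,τ) ≤ A1(q,c,d). -/
/-!
Average over all `(σ, τ)` uniformly. For fixed `i` and `l` the pair `(σ i, τ l)` is then uniform
on `Fin n × Fin m`, so by linearity the expected objective value is exactly `A1 q c d`, and some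
feasible solution is no worse than this expectation.
-/

open Finset BigOperators

section
variable {α β M : Type*} [Fintype α] [Fintype β] [AddCommMonoid M] [Module ℚ≥0 M]

theorem Fintype.expect_comp_eval [DecidableEq α] (a : α) (G : β → M) :
    𝔼 f : α → β, G (f a) = 𝔼 b, G b := by
  rcases isEmpty_or_nonempty β with hβ | hβ
  · have : IsEmpty (α → β) := ⟨fun f => isEmptyElim (f a)⟩
    simp [univ_eq_empty]
  rw [← Fintype.expect_equiv (Equiv.funSplitAt a β).symm _ _ fun _ => rfl,
    ← univ_product_univ, expect_product]
  simp

theorem Fintype.expect_expect_comp_eval_eval [DecidableEq α] [DecidableEq β] (a : α) (b : β)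
    (G : β → α → M) :
    𝔼 σ : α → β, 𝔼 τ : β → α, G (σ a) (τ b) = 𝔼 j, 𝔼 k, G j k := by
  simp only [Fintype.expect_comp_eval b (G _), Fintype.expect_comp_eval a fun j => 𝔼 k, G j k]

end

theorem A1_eq_sum_expect {m n : ℕ} (q : Fin m → Fin n → Fin m → Fin n → ℝ)
    (c d : Fin m → Fin n → ℝ) :
    A1 q c d = ∑ i, ∑ l, 𝔼 j, 𝔼 k, q i j k l + ∑ i, 𝔼 j, c i j + ∑ l, 𝔼 k, d k l := by
  simp only [Fintype.expect_eq_sum_div_card, Fintype.card_fin, ← sum_div, A1]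
  have hq : ∑ i, ∑ l, ∑ j, ∑ k, q i j k l = ∑ i, ∑ j, ∑ k, ∑ l, q i j k l :=
    sum_congr rfl fun i _ => by rw [sum_comm]; exact sum_congr rfl fun j _ => sum_comm
  rw [hq, sum_comm (f := fun l k => d k l)]
  ring

theorem expect_f1_eq_A1 {m n : ℕ} [NeZero m] [NeZero n]
    (q : Fin m → Fin n → Fin m → Fin n → ℝ) (c d : Fin m → Fin n → ℝ) :
    𝔼 p : (Fin m → Fin n) × (Fin n → Fin m), f1 q c d p.1 p.2 = A1 q c d := by
  rw [A1_eq_sum_expect, ← univ_product_univ, expect_product]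
  simp only [f1, expect_add_distrib, expect_sum_comm, expect_const univ_nonempty,
    Fintype.expect_comp_eval]
  congr 2
  · exact sum_congr rfl fun i _ => sum_congr rfl fun l _ =>
      Fintype.expect_expect_comp_eval_eval i l fun j k => q i j k l
  · exact funext fun l => Fintype.expect_comp_eval l fun k => d k l

theorem exists_no_worse_than_average_BQAP1 (m n : ℕ) (hm : 0 < m) (hn : 0 < n)
    (q : Fin m → Fin n → Fin m → Fin n → ℝ) (c d : Fin m → Fin n → ℝ) :
    ∃ (σ : Fin m → Fin n) (τ : Fin n → Fin m),
      f1 q c d σ τ ≤ A1 q c d := by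
  have : NeZero m := ⟨hm.ne'⟩
  have : NeZero n := ⟨hn.ne'⟩
  obtain ⟨⟨σ, τ⟩, -, h⟩ := exists_le_of_expect_le univ_nonempty (expect_f1_eq_A1 q c d).le
  exact ⟨σ, τ, h⟩
end

section
/- For all positive integers m, n and every BQAP2 instance (q, c, d), there exists a feasible solution (σ,τ) with f2(σ,τ) ≤ A2(q,c,d). -/
/-! Run over the `m * n` pairs of cyclic shifts `σ i = i + a`, `τ l = l + b`. Every entry
`q i j k l` is hit by exactly one pair, every `c i j` by `n` pairs and every `d k l` by `m` pairs,
so the mean of `f2` over these pairs is `A2`, and some pair is no worse than the mean. -/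

open Finset

section ShiftSums

variable {G M : Type*} [AddGroup G] [Fintype G] [AddCommMonoid M]

theorem sum_sum_apply_add_right (F : G → G → M) :
    ∑ a, ∑ i, F i (i + a) = ∑ i, ∑ j, F i j := by
  rw [sum_comm]
  exact sum_congr rfl fun i _ => Equiv.sum_comp (Equiv.addLeft i) (F i)

theorem sum_sum_apply_add_left (F : G → G → M) :
    ∑ b, ∑ l, F (l + b) l = ∑ k, ∑ l, F k l :=
  (sum_sum_apply_add_right fun l k => F k l).trans sum_comm

end ShiftSums

section CyclicShifts

variable {m n : ℕ} [NeZero m] [NeZero n]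

theorem sum_sum_sum_sum_apply_add_add (q : Fin m → Fin m → Fin n → Fin n → ℝ) :
    ∑ a : Fin m, ∑ b : Fin n, ∑ i, ∑ l, q i (i + a) (l + b) l
      = ∑ i, ∑ j, ∑ k, ∑ l, q i j k l := calc
  _ = ∑ a : Fin m, ∑ i, ∑ b : Fin n, ∑ l, q i (i + a) (l + b) l :=
      sum_congr rfl fun _ _ => sum_comm
  _ = ∑ i, ∑ j, ∑ b : Fin n, ∑ l, q i j (l + b) l :=
      sum_sum_apply_add_right fun i j => ∑ b : Fin n, ∑ l, q i j (l + b) l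
  _ = _ := sum_congr rfl fun i _ => sum_congr rfl fun j _ => sum_sum_apply_add_left (q i j)

theorem sum_sum_f2_add (q : Fin m → Fin m → Fin n → Fin n → ℝ)
    (c : Fin m → Fin m → ℝ) (d : Fin n → Fin n → ℝ) :
    ∑ a : Fin m, ∑ b : Fin n, f2 q c d (· + a) (· + b)
      = ∑ i, ∑ j, ∑ k, ∑ l, q i j k l + n * ∑ i, ∑ j, c i j + m * ∑ i, ∑ j, d i j := by
  simp only [f2, sum_add_distrib]
  rw [sum_sum_sum_sum_apply_add_add,
    sum_comm (s := univ (α := Fin m)) (f := fun _ b => ∑ l, d (l + b) l)]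
  simp only [sum_const, card_univ, Fintype.card_fin, nsmul_eq_mul, ← mul_sum,
    sum_sum_apply_add_right, sum_sum_apply_add_left]

theorem mul_mul_A2 (q : Fin m → Fin m → Fin n → Fin n → ℝ)
    (c : Fin m → Fin m → ℝ) (d : Fin n → Fin n → ℝ) :
    (m * n : ℝ) * A2 q c d
      = ∑ i, ∑ j, ∑ k, ∑ l, q i j k l + n * ∑ i, ∑ j, c i j + m * ∑ i, ∑ j, d i j := by
  have hm : (m : ℝ) ≠ 0 := NeZero.ne _
  have hn : (n : ℝ) ≠ 0 := NeZero.ne _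
  rw [A2]
  field_simp

end CyclicShifts

theorem exists_no_worse_than_average_BQAP2 (m n : ℕ) (hm : 0 < m) (hn : 0 < n)
    (q : Fin m → Fin m → Fin n → Fin n → ℝ)
    (c : Fin m → Fin m → ℝ) (d : Fin n → Fin n → ℝ) :
    ∃ (σ : Fin m → Fin m) (τ : Fin n → Fin n),
      f2 q c d σ τ ≤ A2 q c d := by
  have : NeZero m := ⟨hm.ne'⟩
  have : NeZero n := ⟨hn.ne'⟩
  have hmean : ∑ ab : Fin m × Fin n, f2 q c d (· + ab.1) (· + ab.2)
      = ∑ _ab : Fin m × Fin n, A2 q c d := by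
    rw [Fintype.sum_prod_type, sum_sum_f2_add, sum_const, card_univ, Fintype.card_prod,
      Fintype.card_fin, Fintype.card_fin, nsmul_eq_mul, Nat.cast_mul, mul_mul_A2]
  obtain ⟨⟨a, b⟩, -, hab⟩ := exists_le_of_sum_le univ_nonempty hmean.le
  exact ⟨(· + a), (· + b), hab⟩
end

section
/- In the median-hardness instance, the feasible solutions pair up with objective values summing to ∑ a_i: let n be an even positive integer, a : Fin n → ℝ, and consider the BQAP1 instance with m = n, q ≡ 0, d ≡ 0, and c i j = a i if j < n/2 and c i j = 0 otherwise. Then for every feasible solution (σ,τ), f1(σ,τ) + f1(σ',τ) = ∑_{i : Fin n} a i, where σ'(i) = σ(i) + n/2 (addition in Fin n, i.e. modulo n). -/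
theorem median_instance_pairing (n : ℕ) (hn : 0 < n) (hne : Even n)
    (a : Fin n → ℝ)
    (q : Fin n → Fin n → Fin n → Fin n → ℝ) (hq : q = 0)
    (d : Fin n → Fin n → ℝ) (hd : d = 0)
    (c : Fin n → Fin n → ℝ)
    (hc : c = fun i (j : Fin n) => if (j : ℕ) < n / 2 then a i else 0)
    (σ : Fin n → Fin n) (τ : Fin n → Fin n) :
    f1 q c d σ τ +
      f1 q c d
        (fun i => σ i + (⟨n / 2, Nat.div_lt_self hn (by norm_num)⟩ : Fin n)) τ =
      ∑ i, a i := by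
  subst hq hd hc
  simp only [f1, Pi.zero_apply, Finset.sum_const_zero, add_zero, zero_add]
  rw [← Finset.sum_add_distrib]
  apply Finset.sum_congr rfl
  intro i _
  obtain ⟨k, hk⟩ := hne
  have hk2 : n / 2 = k := by omega
  have hval : (σ i + (⟨n / 2, Nat.div_lt_self hn (by norm_num)⟩ : Fin n)).val
      = ((σ i : ℕ) + n / 2) % n := by
    rw [Fin.add_def]
  have hσ := (σ i).isLt
  by_cases h : (σ i : ℕ) < n / 2
  · have : ((σ i : ℕ) + n / 2) % n = (σ i : ℕ) + n / 2 := Nat.mod_eq_of_lt (by omega)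
    rw [if_pos h, if_neg (by rw [hval, this]; omega), add_zero]
  · have : ((σ i : ℕ) + n / 2) % n = (σ i : ℕ) + n / 2 - n := by
      rw [Nat.mod_eq_sub_mod (by omega)]
      exact Nat.mod_eq_of_lt (by omega)
    rw [if_neg h, if_pos (by rw [hval, this]; omega), zero_add]
end

section
/- In the median-hardness instance, at least half of the feasible solutions lie on each side of ∑ a_i / 2: let n be an even positive integer, a : Fin n → ℝ, and consider the BQAP1 instance with m = n, q ≡ 0, d ≡ 0, and c i j = a i if j < n/2 and c i j = 0 otherwise. Then the number of feasible solutions (σ,τ) with f1(σ,τ) ≤ (∑_{i} a i)/2 is at least n^n·n^n/2, and the number of feasible solutions with f1(σ,τ) ≥ (∑_{i} a i)/2 is at least n^n·n^n/2. -/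
theorem median_instance_half_on_each_side (n : ℕ) (hn : 0 < n) (hne : Even n)
    (a : Fin n → ℝ)
    (q : Fin n → Fin n → Fin n → Fin n → ℝ) (hq : q = 0)
    (d : Fin n → Fin n → ℝ) (hd : d = 0)
    (c : Fin n → Fin n → ℝ)
    (hc : c = fun i (j : Fin n) => if (j : ℕ) < n / 2 then a i else 0) :
    ((n : ℝ) ^ n * (n : ℝ) ^ n / 2 ≤
        ({στ : (Fin n → Fin n) × (Fin n → Fin n) |
            f1 q c d στ.1 στ.2 ≤ (∑ i, a i) / 2}.ncard : ℝ)) ∧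
    ((n : ℝ) ^ n * (n : ℝ) ^ n / 2 ≤
        ({στ : (Fin n → Fin n) × (Fin n → Fin n) |
            f1 q c d στ.1 στ.2 ≥ (∑ i, a i) / 2}.ncard : ℝ)) := by
  subst hq hd hc
  obtain ⟨k, hk⟩ := hne
  have hk' : k < n := by omega
  set K : Fin n := ⟨k, hk'⟩ with hK
  -- flipping lemma
  have flip : ∀ x : Fin n, (((x + K : Fin n) : ℕ) < n / 2 ↔ ¬ ((x : ℕ) < n / 2)) := by
    intro x
    have hx := x.isLt
    have hv : ((x + K : Fin n) : ℕ) = (x.val + k) % n := Fin.val_add x K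
    rcases lt_or_ge (x.val + k) n with h | h
    · rw [Nat.mod_eq_of_lt h] at hv; omega
    · rw [Nat.mod_eq_sub_mod h, Nat.mod_eq_of_lt (by omega)] at hv; omega
  -- involution
  set g : (Fin n → Fin n) × (Fin n → Fin n) → (Fin n → Fin n) × (Fin n → Fin n) :=
    fun στ => (fun i => στ.1 i + K, στ.2) with hg
  haveI : NeZero n := ⟨hn.ne'⟩
  have hKK0 : K + K = 0 := by
    apply Fin.ext
    have h1 : ((K + K : Fin n) : ℕ) = (k + k) % n := Fin.val_add K K
    rw [h1, Fin.val_zero, ← hk, Nat.mod_self]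
  have hKK : ∀ x : Fin n, x + K + K = x := fun x => by
    rw [add_assoc, hKK0, add_zero]
  have hinv : Function.Involutive g := by
    intro στ
    simp only [hg]
    ext i
    · show ((στ.1 i + K + K : Fin n) : ℕ) = ((στ.1 i : Fin n) : ℕ)
      rw [hKK]
    · rfl
  set c : Fin n → Fin n → ℝ := fun i (j : Fin n) => if (j : ℕ) < n / 2 then a i else 0 with hc
  have hf : ∀ σ τ : Fin n → Fin n, f1 0 c 0 σ τ = ∑ i, c i (σ i) := by
    intro σ τ
    simp [f1]
  have hfg : ∀ στ : (Fin n → Fin n) × (Fin n → Fin n),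
      f1 0 c 0 (g στ).1 (g στ).2 = (∑ i, a i) - f1 0 c 0 στ.1 στ.2 := by
    intro στ
    rw [hf, hf, ← Finset.sum_sub_distrib]
    refine Finset.sum_congr rfl fun i _ => ?_
    simp only [hg, hc]
    rcases (flip (στ.1 i)).symm with hiff
    by_cases h : ((στ.1 i : ℕ) < n / 2)
    · rw [if_pos h, if_neg (by rw [flip]; exact not_not_intro h)]
      ring
    · rw [if_neg h, if_pos ((flip _).mpr h)]
      ring
  set S : ℝ := ∑ i, a i with hS
  set A : Set ((Fin n → Fin n) × (Fin n → Fin n)) :=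
    {στ | f1 0 c 0 στ.1 στ.2 ≤ S / 2} with hA
  set B : Set ((Fin n → Fin n) × (Fin n → Fin n)) :=
    {στ | f1 0 c 0 στ.1 στ.2 ≥ S / 2} with hB
  have hBA : B = g '' A := by
    ext στ
    constructor
    · intro h
      refine ⟨g στ, ?_, hinv στ⟩
      simp only [hA, Set.mem_setOf_eq]
      rw [hfg]
      simp only [hB, Set.mem_setOf_eq] at h
      linarith
    · rintro ⟨στ', h', rfl⟩
      simp only [hB, Set.mem_setOf_eq]
      rw [hfg]
      simp only [hA, Set.mem_setOf_eq] at h'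
      linarith
  have hcard : B.ncard = A.ncard := by
    rw [hBA]
    exact Set.ncard_image_of_injective A hinv.injective
  have hunion : A ∪ B = Set.univ := by
    ext στ
    simp only [hA, hB, Set.mem_union, Set.mem_setOf_eq, Set.mem_univ, iff_true]
    exact le_total _ _
  have htotal : (A ∪ B).ncard = n ^ n * n ^ n := by
    rw [hunion, Set.ncard_univ]
    simp [Nat.card_eq_fintype_card]
  have hle : n ^ n * n ^ n ≤ A.ncard + B.ncard := by
    rw [← htotal]
    exact Set.ncard_union_le A B
  rw [hcard] at hle
  have h2 : (n : ℝ) ^ n * (n : ℝ) ^ n ≤ 2 * A.ncard := by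
    have h3 : ((n ^ n * n ^ n : ℕ) : ℝ) ≤ ((A.ncard + A.ncard : ℕ) : ℝ) := by
      exact_mod_cast hle
    push_cast at h3
    linarith
  constructor
  · linarith
  · rw [show B.ncard = A.ncard from hcard] at *
    linarith
end

section
/- In the median-hardness instance, the attainable objective values are exactly the subset sums of the a_i: let n be an even positive integer, a : Fin n → ℝ, and consider the BQAP1 instance with m = n, q ≡ 0, d ≡ 0, and c i j = a i if j < n/2 and c i j = 0 otherwise. Then a real number α is the objective value f1(σ,τ) of some feasible solution (σ,τ) if and only if there exists a subset S ⊆ Fin n with ∑_{i ∈ S} a i = α. -/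
theorem median_instance_values_are_subset_sums (n : ℕ) (hn : 0 < n) (hne : Even n)
    (a : Fin n → ℝ)
    (q : Fin n → Fin n → Fin n → Fin n → ℝ) (hq : q = 0)
    (d : Fin n → Fin n → ℝ) (hd : d = 0)
    (c : Fin n → Fin n → ℝ)
    (hc : c = fun i (j : Fin n) => if (j : ℕ) < n / 2 then a i else 0)
    (α : ℝ) :
    (∃ (σ : Fin n → Fin n) (τ : Fin n → Fin n), f1 q c d σ τ = α) ↔
      (∃ S : Finset (Fin n), ∑ i ∈ S, a i = α) := by
  have h2 : 2 ≤ n := Nat.le_of_dvd hn hne.two_dvd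
  have hhalf : 0 < n / 2 := Nat.div_pos h2 two_pos
  have hhalf' : n / 2 < n := Nat.div_lt_self hn one_lt_two
  subst hq hd hc
  simp only [f1, Pi.zero_apply, Finset.sum_const_zero, add_zero, zero_add]
  constructor
  · rintro ⟨σ, τ, rfl⟩
    refine ⟨Finset.univ.filter (fun i => (σ i : ℕ) < n / 2), ?_⟩
    rw [Finset.sum_filter]
  · rintro ⟨S, rfl⟩
    refine ⟨fun i => if i ∈ S then ⟨0, hn⟩ else ⟨n / 2, hhalf'⟩, fun l => l, ?_⟩
    have : (∑ x, if ((if x ∈ S then (⟨0, hn⟩ : Fin n) else ⟨n / 2, hhalf'⟩) : Fin n).1 < n / 2 then a x else 0) = ∑ x, if x ∈ S then a x else 0 := by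
      refine Finset.sum_congr rfl fun x _ => ?_
      by_cases h : x ∈ S <;> simp [h, hhalf]
    rw [this, ← Finset.sum_filter, Finset.filter_mem_eq_inter, Finset.univ_inter]
end
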